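/- In a trace monoid M(Σ,I), any two traces x, y with a common upper bound for the left-divisibility order have a least upper bound x ∨ y, and any two traces have a greatest lower bound x ∧ y. For cliques x, y (viewed as subsets of Σ), x ∧ y is the clique corresponding to the set intersection x ∩ y. -/

import Mathlib

open scoped Classical

section TracePre

variable {A : Type*}

/-- The elementary swap relation from an independence relation. -/
def swapRel (I : A → A → Prop) : FreeMonoid A → FreeMonoid A → Prop :=
  fun x y => ∃ a b, I a b ∧ x = FreeMonoid.of a * FreeMonoid.of b ∧
    y = FreeMonoid.of b * FreeMonoid.of a

/-- The congruence generated by the commutations. -/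
def traceCon (I : A → A → Prop) : Con (FreeMonoid A) := conGen (swapRel I)

/-- The trace monoid `M(A, I)`. -/
abbrev TraceMonoid (A : Type*) (I : A → A → Prop) := (traceCon I).Quotient

/-- Image of a letter in the trace monoid. -/
def trOf (I : A → A → Prop) (a : A) : TraceMonoid A I := (traceCon I).mk' (FreeMonoid.of a)

theorem traceCon_le_ker {M : Type*} [CommMonoid M] {I : A → A → Prop}
    (φ : FreeMonoid A →* M) : traceCon I ≤ Con.ker φ := by
  apply Con.conGen_le.2
  rintro x y ⟨a, b, _, rfl, rfl⟩
  simp [Con.ker_rel, map_mul, mul_comm]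

/-- Length of a trace. -/
noncomputable def trLen {I : A → A → Prop} (x : TraceMonoid A I) : ℕ :=
  Multiplicative.toAdd
    ((Con.lift (traceCon I) (FreeMonoid.lift fun _ => Multiplicative.ofAdd (1 : ℕ))
      (traceCon_le_ker _)) x)

/-- Number of occurrences of the letter `a` in a trace. -/
noncomputable def trCount {I : A → A → Prop} (a : A) (x : TraceMonoid A I) : ℕ :=
  Multiplicative.toAdd
    ((Con.lift (traceCon I)
      (FreeMonoid.lift fun b => Multiplicative.ofAdd (if b = a then (1 : ℕ) else 0))
      (traceCon_le_ker _)) x)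

/-- Lists of pairwise distinct, pairwise independent letters. -/
def IsCliqueList (I : A → A → Prop) (l : List A) : Prop :=
  l.Pairwise fun a b => a ≠ b ∧ I a b

/-- The trace associated with a list of letters. -/
def listProd (I : A → A → Prop) (l : List A) : TraceMonoid A I := (l.map (trOf I)).prod

/-- A clique of the trace monoid. -/
def IsClique (I : A → A → Prop) (x : TraceMonoid A I) : Prop :=
  ∃ l, IsCliqueList I l ∧ x = listProd I l

/-- The trace associated with a finite set of letters. -/
noncomputable def fprod (I : A → A → Prop) (c : Finset A) : TraceMonoid A I :=
  listProd I c.toList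

/-- Normal pairs of cliques, cliques being represented by finite sets of letters. -/
def NormalF (I : A → A → Prop) (c d : Finset A) : Prop :=
  ∀ b ∈ d, ∃ a ∈ c, (¬ I a b ∨ a = b)

/-- Greatest lower bound for left divisibility. -/
def IsGlbDvd {M : Type*} [Monoid M] (x y g : M) : Prop :=
  g ∣ x ∧ g ∣ y ∧ ∀ w, w ∣ x → w ∣ y → w ∣ g

/-- Least upper bound for left divisibility. -/
def IsLubDvd {M : Type*} [Monoid M] (x y z : M) : Prop :=
  x ∣ z ∧ y ∣ z ∧ ∀ w, x ∣ w → y ∣ w → z ∣ w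

end TracePre

section CSPre

variable {A X : Type*}

/-- A concurrent system: a right action of a trace monoid on `X ∪ {⊥}`,
`⊥` being encoded by `none`. -/
structure CS (A : Type*) (I : A → A → Prop) (X : Type*) where
  act : Option X → TraceMonoid A I → Option X
  act_one : ∀ s, act s 1 = s
  act_mul : ∀ s x y, act s (x * y) = act (act s x) y
  act_bot : ∀ x, act none x = none

variable {I : A → A → Prop}

/-- The letter `a` is enabled at state `α`. -/
def CS.Enabled (S : CS A I X) (α : X) (a : A) : Prop := S.act (some α) (trOf I a) ≠ none

/-- The set of executions starting from `α`. -/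
def CS.MSet (S : CS A I X) (α : X) : Set (TraceMonoid A I) :=
  {x | S.act (some α) x ≠ none}

/-- A deterministic concurrent system: any two letters enabled at a common state
commute. -/
def CS.Deterministic (S : CS A I X) : Prop :=
  ∀ (α : X) (a b : A), a ≠ b → S.Enabled α a → S.Enabled α b → I a b

/-- The finite set of letters enabled at an extended state. -/
noncomputable def CS.enabledFinset [Fintype A] (S : CS A I X) (s : Option X) : Finset A :=
  Finset.univ.filter fun a => S.act s (trOf I a) ≠ none

/-- A generalised execution from `α`, as an infinite normal sequence of cliques
all of whose finite prefixes are executions. -/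
def CS.IsGenExec (S : CS A I X) (α : X) (c : ℕ → Finset A) : Prop :=
  (∀ i, (↑(c i) : Set A).Pairwise I) ∧ (∀ i, NormalF I (c i) (c (i + 1))) ∧
    ∀ k, S.act (some α) (((List.range k).map fun i => fprod I (c i)).prod) ≠ none

/-- An infinite execution from `α`: a generalised execution with all cliques nonempty. -/
def CS.IsInfExec (S : CS A I X) (α : X) (c : ℕ → Finset A) : Prop :=
  S.IsGenExec α c ∧ ∀ i, c i ≠ ∅

end CSPre

/-!
Erasing from a trace all letters outside a set `S` of pairwise dependent letters is a
well-defined morphism to the free monoid, and `x ∣ z` holds iff each such projection of `x` is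
a prefix of that of `z`: if all projections of `z` through a letter `a` start with `a`, every
letter before the first `a` in a word for `z` is independent of `a`, so `a ∣ z`. This gives left
cancellation. If `a ∣ u` and `y ∣ u`, either `a ∣ y` or `y` has no letter dependent on `a`; in
both cases the common multiples of `a` and `y` are the `a * w` with `y' ∣ w` for a residual `y'`,
and the least upper bound of `a * t` and `y` is `a` times that of `t` and `y'`. For cliques every projection has at most one letter, which makes the greatest
lower bound of two cliques their intersection.
-/

namespace FreeMonoid

variable {α : Type*}

theorem dvd_iff_isPrefix {u v : FreeMonoid α} : u ∣ v ↔ u.toList <+: v.toList := by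
  constructor
  · rintro ⟨c, rfl⟩
    exact ⟨c.toList, (toList_mul u c).symm⟩
  · rintro ⟨t, ht⟩
    exact ⟨ofList t, toList.injective (by simp [ht])⟩

theorem of_dvd_ofList_iff {a : α} {l : List α} : of a ∣ ofList l ↔ l.head? = some a := by
  rw [dvd_iff_isPrefix, toList_of, toList_ofList]
  cases l <;> simp [List.cons_prefix_cons, eq_comm]

theorem eq_of_of_dvd_of_mul {a b : α} {s : FreeMonoid α} (h : of a ∣ of b * s) : a = b := by
  rw [← ofList_toList s, ← ofList_cons, of_dvd_ofList_iff] at h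
  simpa [eq_comm] using h

theorem mem_of_of_dvd_ofList {a : α} {l : List α} (h : of a ∣ ofList l) : a ∈ l := by
  rw [of_dvd_ofList_iff] at h
  exact List.mem_of_head? h

theorem eq_one_or_of_dvd_of_dvd {a : α} {u v : FreeMonoid α} (hv : v ∣ u) (ha : of a ∣ u) :
    v = 1 ∨ of a ∣ v := by
  rw [dvd_iff_isPrefix] at hv ha ⊢
  rcases List.prefix_or_prefix_of_prefix hv ha with h | h
  · rw [toList_of, List.prefix_cons_iff] at h
    rcases h with h | ⟨t, h, -⟩
    · exact .inl (toList.injective h)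
    · exact .inr (by simp [h])
  · exact .inr h

theorem eq_one_or_eq_of_dvd_ofList {v : FreeMonoid α} {l : List α} (h : v ∣ ofList l)
    (hl : l.length ≤ 1) : v = 1 ∨ v = ofList l := by
  rw [dvd_iff_isPrefix, toList_ofList] at h
  rcases Nat.le_one_iff_eq_zero_or_eq_one.mp (h.length_le.trans hl) with h0 | h1
  · exact .inl (toList.injective (List.length_eq_zero_iff.mp h0))
  · exact .inr (toList.injective (h.eq_of_length (by have := h.length_le; omega)))

end FreeMonoid

theorem mul_dvd_mul_iff_left_of_isLeftCancelMul {M : Type*} [Monoid M] [IsLeftCancelMul M]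
    (a : M) {b c : M} : a * b ∣ a * c ↔ b ∣ c :=
  ⟨fun ⟨d, h⟩ => ⟨d, mul_left_cancel (by rw [h, mul_assoc])⟩, mul_dvd_mul_left a⟩

namespace TraceMonoid

variable {A : Type*} {I : A → A → Prop}

@[simp] theorem listProd_nil : listProd I [] = 1 := rfl

@[simp] theorem listProd_cons (a : A) (l : List A) :
    listProd I (a :: l) = trOf I a * listProd I l := rfl

@[simp] theorem listProd_append (l₁ l₂ : List A) :
    listProd I (l₁ ++ l₂) = listProd I l₁ * listProd I l₂ := by
  simp [listProd]

theorem listProd_eq_mk' (l : List A) : listProd I l = (traceCon I).mk' (FreeMonoid.ofList l) := by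
  induction l with
  | nil => rfl
  | cons a l ih => rw [listProd_cons, ih, FreeMonoid.ofList_cons, map_mul]; rfl

theorem listProd_surjective : Function.Surjective (listProd I) := by
  intro x
  obtain ⟨w, rfl⟩ := (traceCon I).mk'_surjective x
  exact ⟨w.toList, by rw [listProd_eq_mk', FreeMonoid.ofList_toList]⟩

theorem trOf_commute {a b : A} (h : I a b ∨ I b a) : Commute (trOf I a) (trOf I b) := by
  rcases h with h | h
  · exact (Con.eq _).mpr (ConGen.Rel.of _ _ ⟨a, b, h, rfl, rfl⟩)
  · exact ((Con.eq _).mpr (ConGen.Rel.of _ _ ⟨b, a, h, rfl, rfl⟩)).symm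

theorem trLen_mul (x y : TraceMonoid A I) : trLen (x * y) = trLen x + trLen y := by
  simp [trLen, map_mul, toAdd_mul]

theorem trLen_listProd (l : List A) : trLen (listProd I l) = l.length := by
  induction l with
  | nil => simp [trLen]
  | cons a l ih =>
    rw [listProd_cons, trLen_mul, ih, List.length_cons, Nat.add_comm]
    simp [trLen, trOf]

theorem eq_one_of_trLen_eq_zero {x : TraceMonoid A I} (h : trLen x = 0) : x = 1 := by
  obtain ⟨l, rfl⟩ := listProd_surjective x
  rw [trLen_listProd, List.length_eq_zero_iff] at h
  rw [h, listProd_nil]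

theorem trLen_le_of_dvd {x z : TraceMonoid A I} (h : x ∣ z) : trLen x ≤ trLen z := by
  obtain ⟨c, rfl⟩ := h
  rw [trLen_mul]
  exact Nat.le_add_right _ _

theorem eq_of_dvd_of_trLen_le {x z : TraceMonoid A I} (h : x ∣ z) (hl : trLen z ≤ trLen x) :
    x = z := by
  obtain ⟨c, rfl⟩ := h
  rw [trLen_mul] at hl
  rw [eq_one_of_trLen_eq_zero (x := c) (by omega), mul_one]

theorem dvd_antisymm {x z : TraceMonoid A I} (hxz : x ∣ z) (hzx : z ∣ x) : x = z :=
  eq_of_dvd_of_trLen_le hxz (trLen_le_of_dvd hzx)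

/-- The letters of a trace that lie in a dependent set occur in a well-defined order. -/
def IsDependentSet (I : A → A → Prop) (S : Set A) : Prop :=
  S.Pairwise fun a b => ¬ I a b

theorem isDependentSet_singleton (a : A) : IsDependentSet I {a} :=
  Set.pairwise_singleton _ _

theorem isDependentSet_pair {a b : A} (hab : ¬ I a b) (hba : ¬ I b a) :
    IsDependentSet I {a, b} :=
  Set.pairwise_pair.mpr fun _ => ⟨hab, hba⟩

variable {S : Set A}

theorem traceCon_le_ker_restrict (hS : IsDependentSet I S) :
    traceCon I ≤ Con.ker (FreeMonoid.lift fun a => if a ∈ S then FreeMonoid.of a else 1) := by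
  refine Con.conGen_le.2 ?_
  rintro _ _ ⟨a, b, hab, rfl, rfl⟩
  simp only [Con.ker_rel, map_mul, FreeMonoid.lift_eval_of]
  by_cases ha : a ∈ S <;> by_cases hb : b ∈ S <;> simp only [ha, hb, if_true, if_false, one_mul,
    mul_one]
  have : a = b := by_contra fun hne => hS ha hb hne hab
  rw [this]

noncomputable def proj (hS : IsDependentSet I S) : TraceMonoid A I →* FreeMonoid A :=
  Con.lift _ _ (traceCon_le_ker_restrict hS)

theorem proj_trOf (hS : IsDependentSet I S) (a : A) :
    proj hS (trOf I a) = if a ∈ S then FreeMonoid.of a else 1 := by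
  simp [proj, trOf]

theorem proj_listProd (hS : IsDependentSet I S) (l : List A) :
    proj hS (listProd I l) = FreeMonoid.ofList (l.filter (· ∈ S)) := by
  induction l with
  | nil => rfl
  | cons a l ih =>
    rw [listProd_cons, map_mul, ih, proj_trOf, List.filter_cons]
    split_ifs <;> simp_all [FreeMonoid.ofList_cons]

theorem trOf_dvd_of_forall_proj {a : A} {z : TraceMonoid A I}
    (h : ∀ S (hS : IsDependentSet I S), a ∈ S → FreeMonoid.of a ∣ proj hS z) : trOf I a ∣ z := by
  obtain ⟨l, rfl⟩ := listProd_surjective z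
  induction l with
  | nil =>
    have := h _ (isDependentSet_singleton a) rfl
    rw [proj_listProd] at this
    exact absurd (FreeMonoid.mem_of_of_dvd_ofList this) (by simp)
  | cons b l ih =>
    by_cases hba : b = a
    · subst hba
      exact dvd_mul_right _ _
    have hcomm : I a b ∨ I b a := by
      by_contra! hdep
      have := h _ (isDependentSet_pair hdep.1 hdep.2) (by simp)
      rw [listProd_cons, map_mul, proj_trOf, if_pos (by simp)] at this
      exact hba (FreeMonoid.eq_of_of_dvd_of_mul this).symm
    obtain ⟨c, hc⟩ := ih fun S hS haS => by
      have hbS : b ∉ S := fun hbS => by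
        rcases hcomm with hab | hba'
        · exact hS haS hbS (Ne.symm hba) hab
        · exact hS hbS haS hba hba'
      simpa [proj_trOf, hbS] using h S hS haS
    exact ⟨trOf I b * c, by rw [listProd_cons, hc, ← mul_assoc, ← mul_assoc,
      (trOf_commute hcomm).eq]⟩

theorem dvd_of_forall_proj_dvd {x z : TraceMonoid A I}
    (h : ∀ S (hS : IsDependentSet I S), proj hS x ∣ proj hS z) : x ∣ z := by
  obtain ⟨l, rfl⟩ := listProd_surjective x
  induction l generalizing z with
  | nil => exact one_dvd z
  | cons a t ih =>
    obtain ⟨z', rfl⟩ := trOf_dvd_of_forall_proj fun S hS haS =>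
      (dvd_trans ⟨_, by rw [listProd_cons, map_mul, proj_trOf, if_pos haS]⟩ (h S hS))
    rw [listProd_cons]
    refine mul_dvd_mul_left _ (ih fun S hS => ?_)
    have := h S hS
    rwa [listProd_cons, map_mul, map_mul, mul_dvd_mul_iff_left_of_isLeftCancelMul] at this

theorem dvd_iff_forall_proj_dvd {x z : TraceMonoid A I} :
    x ∣ z ↔ ∀ S (hS : IsDependentSet I S), proj hS x ∣ proj hS z :=
  ⟨fun h _ hS => map_dvd (proj hS) h, dvd_of_forall_proj_dvd⟩

theorem eq_of_forall_proj_eq {x z : TraceMonoid A I}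
    (h : ∀ S (hS : IsDependentSet I S), proj hS x = proj hS z) : x = z :=
  dvd_antisymm (dvd_of_forall_proj_dvd fun S hS => (h S hS).dvd)
    (dvd_of_forall_proj_dvd fun S hS => (h S hS).symm.dvd)

instance : IsLeftCancelMul (TraceMonoid A I) where
  mul_left_cancel x s t hst := eq_of_forall_proj_eq fun S hS =>
    mul_left_cancel (by simpa only [map_mul] using congrArg (proj hS) hst)

theorem trOf_dvd_or_forall_proj_eq_one {a : A} {y u : TraceMonoid A I} (hau : trOf I a ∣ u)
    (hyu : y ∣ u) : trOf I a ∣ y ∨ ∀ S (hS : IsDependentSet I S), a ∈ S → proj hS y = 1 := by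
  obtain ⟨m, rfl⟩ := listProd_surjective y
  have key : ∀ S (hS : IsDependentSet I S), a ∈ S →
      proj hS (listProd I m) = 1 ∨ FreeMonoid.of a ∣ proj hS (listProd I m) := fun S hS haS =>
    FreeMonoid.eq_one_or_of_dvd_of_dvd (map_dvd _ hyu)
      (by simpa [proj_trOf, haS] using map_dvd (proj hS) hau)
  by_cases ham : a ∈ m
  · refine .inl (trOf_dvd_of_forall_proj fun S hS haS => (key S hS haS).resolve_left ?_)
    rw [proj_listProd]
    intro h
    have hnil : m.filter (· ∈ S) = [] := congrArg FreeMonoid.toList h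
    exact List.filter_eq_nil_iff.mp hnil a ham (by simpa using haS)
  · refine .inr fun S hS haS => (key S hS haS).resolve_right fun h => ham ?_
    rw [proj_listProd] at h
    exact (List.mem_filter.mp (FreeMonoid.mem_of_of_dvd_ofList h)).1

theorem exists_residual {a : A} {y u : TraceMonoid A I} (hau : trOf I a ∣ u) (hyu : y ∣ u) :
    ∃ y', ∀ w, y ∣ trOf I a * w ↔ y' ∣ w := by
  rcases trOf_dvd_or_forall_proj_eq_one hau hyu with ⟨y₁, rfl⟩ | hy
  · exact ⟨y₁, fun w => mul_dvd_mul_iff_left_of_isLeftCancelMul _⟩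
  · refine ⟨y, fun w => ?_⟩
    simp only [dvd_iff_forall_proj_dvd, map_mul, proj_trOf]
    refine forall₂_congr fun S hS => ?_
    by_cases haS : a ∈ S <;> simp [haS, hy S hS]

theorem exists_isLubDvd {x y : TraceMonoid A I} (h : ∃ u, x ∣ u ∧ y ∣ u) :
    ∃ z, IsLubDvd x y z := by
  obtain ⟨l, rfl⟩ := listProd_surjective x
  induction l generalizing y with
  | nil => exact ⟨y, one_dvd y, dvd_rfl, fun _ _ h => h⟩
  | cons a t ih =>
    obtain ⟨u, hxu, hyu⟩ := h
    rw [listProd_cons] at hxu ⊢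
    obtain ⟨u₁, rfl⟩ := dvd_of_mul_right_dvd hxu
    obtain ⟨y', hy'⟩ := exists_residual (dvd_mul_right _ _) hyu
    obtain ⟨z₁, htz, hyz, hmin⟩ :=
      ih ⟨u₁, (mul_dvd_mul_iff_left_of_isLeftCancelMul _).mp hxu, (hy' u₁).mp hyu⟩
    refine ⟨trOf I a * z₁, mul_dvd_mul_left _ htz, (hy' z₁).mpr hyz, fun w hxw hyw => ?_⟩
    obtain ⟨w₁, rfl⟩ := dvd_of_mul_right_dvd hxw
    exact mul_dvd_mul_left _
      (hmin w₁ ((mul_dvd_mul_iff_left_of_isLeftCancelMul _).mp hxw) ((hy' w₁).mp hyw))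

/-- A common divisor of maximal length is the greatest one: its least upper bound with any other
common divisor is again a common divisor. -/
theorem exists_isGlbDvd (x y : TraceMonoid A I) : ∃ g, IsGlbDvd x y g := by
  let lengths : Set ℕ := {n | ∃ g, g ∣ x ∧ g ∣ y ∧ trLen g = n}
  have hne : lengths.Nonempty := ⟨_, 1, one_dvd x, one_dvd y, rfl⟩
  have hbdd : BddAbove lengths := ⟨trLen x, by rintro _ ⟨g, hgx, -, rfl⟩; exact trLen_le_of_dvd hgx⟩
  obtain ⟨g, hgx, hgy, hg⟩ := Nat.sSup_mem hne hbdd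
  refine ⟨g, hgx, hgy, fun w hwx hwy => ?_⟩
  obtain ⟨z, hgz, hwz, hzmin⟩ := exists_isLubDvd ⟨x, hgx, hwx⟩
  have hzlen : trLen z ≤ trLen g := hg ▸ le_csSup hbdd ⟨z, hzmin x hgx hwx, hzmin y hgy hwy, rfl⟩
  exact eq_of_dvd_of_trLen_le hgz hzlen ▸ hwz

theorem listProd_perm {l l' : List A} (hl : (l.map (trOf I)).Pairwise Commute) (h : l.Perm l') :
    listProd I l = listProd I l' :=
  (h.map _).prod_eq' hl

theorem _root_.IsCliqueList.pairwise_commute {l : List A} (hl : IsCliqueList I l) :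
    (l.map (trOf I)).Pairwise Commute :=
  List.pairwise_map.mpr (hl.imp fun hab => trOf_commute (.inl hab.2))

theorem listProd_dvd_of_subperm {l m : List A} (hl : IsCliqueList I l) (h : m.Subperm l) :
    listProd I m ∣ listProd I l := by
  obtain ⟨m', hm'm, hm'l⟩ := h
  obtain ⟨r, hr⟩ := hm'l.exists_perm_append
  rw [listProd_perm hl.pairwise_commute hr, listProd_append,
    listProd_perm (IsCliqueList.pairwise_commute (hl.sublist hm'l)) hm'm]
  exact dvd_mul_right _ _

theorem _root_.IsCliqueList.length_filter_le_one {l : List A} {S : Set A} (hl : IsCliqueList I l)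
    (hS : IsDependentSet I S) : (l.filter (· ∈ S)).length ≤ 1 := by
  have hfalse : (l.filter (· ∈ S)).Pairwise fun _ _ => False :=
    (hl.sublist List.filter_sublist).imp_of_mem fun ha hb hab => by
      simp only [List.mem_filter, decide_eq_true_eq] at ha hb
      exact hS ha.2 hb.2 hab.1 hab.2
  generalize l.filter (· ∈ S) = L at hfalse ⊢
  obtain _ | ⟨a, _ | ⟨b, t⟩⟩ := L
  · simp
  · simp
  · exact ((List.pairwise_cons.mp hfalse).1 b (by simp)).elim

theorem dvd_listProd_filter_mem {w : TraceMonoid A I} {l₁ l₂ : List A} [DecidableEq A]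
    (h₁ : IsCliqueList I l₁) (hw₁ : w ∣ listProd I l₁) (hw₂ : w ∣ listProd I l₂) :
    w ∣ listProd I (l₁.filter fun a => decide (a ∈ l₂)) := by
  rw [dvd_iff_forall_proj_dvd] at hw₁ hw₂ ⊢
  intro S hS
  specialize hw₁ S hS
  specialize hw₂ S hS
  rw [proj_listProd] at hw₁ hw₂ ⊢
  rcases FreeMonoid.eq_one_or_eq_of_dvd_ofList hw₁ (h₁.length_filter_le_one hS) with h | h
  · exact h ▸ one_dvd _
  rw [h] at hw₂ ⊢
  suffices hL : (l₁.filter (· ∈ S)).filter (fun a => decide (a ∈ l₂)) = l₁.filter (· ∈ S) by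
    rw [List.filter_comm, hL]
  refine List.filter_eq_self.mpr fun a ha => ?_
  have := (FreeMonoid.dvd_iff_isPrefix.mp hw₂).subset ha
  simp only [FreeMonoid.toList_ofList, List.mem_filter] at this
  simpa using this.1

theorem isGlbDvd_listProd_filter_mem [DecidableEq A] {l₁ l₂ : List A} (h₁ : IsCliqueList I l₁)
    (h₂ : IsCliqueList I l₂) :
    IsGlbDvd (listProd I l₁) (listProd I l₂)
      (listProd I (l₁.filter fun a => decide (a ∈ l₂))) := by
  have hsub : (l₁.filter fun a => decide (a ∈ l₂)).Sublist l₁ := List.filter_sublist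
  have hnodup : (l₁.filter fun a => decide (a ∈ l₂)).Nodup := (h₁.sublist hsub).imp (·.1)
  refine ⟨listProd_dvd_of_subperm h₁ hsub.subperm,
    listProd_dvd_of_subperm h₂ (hnodup.subperm fun a ha => ?_),
    fun w hw₁ hw₂ => dvd_listProd_filter_mem h₁ hw₁ hw₂⟩
  simpa using (List.mem_filter.mp ha).2

end TraceMonoid

theorem stmt5_general {A : Type*} [DecidableEq A] {I : A → A → Prop} :
    (∀ x y : TraceMonoid A I, (∃ u, x ∣ u ∧ y ∣ u) → ∃ z, IsLubDvd x y z) ∧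
    (∀ x y : TraceMonoid A I, ∃ g, IsGlbDvd x y g) ∧
    (∀ l₁ l₂ : List A, IsCliqueList I l₁ → IsCliqueList I l₂ →
      IsGlbDvd (listProd I l₁) (listProd I l₂)
        (listProd I (l₁.filter fun a => decide (a ∈ l₂)))) :=
  ⟨fun _ _ => TraceMonoid.exists_isLubDvd, TraceMonoid.exists_isGlbDvd,
    fun _ _ => TraceMonoid.isGlbDvd_listProd_filter_mem⟩

/-- any two traces with a common upper bound (for left divisibility)
have a least upper bound; any two traces have a greatest lower bound; and for two
cliques the greatest lower bound is the clique given by the intersection of their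
sets of letters. -/
theorem stmt5 {A : Type*} [Fintype A] [DecidableEq A] {I : A → A → Prop}
    (hsym : Symmetric I) (hirr : Irreflexive I) :
    (∀ x y : TraceMonoid A I, (∃ u, x ∣ u ∧ y ∣ u) → ∃ z, IsLubDvd x y z) ∧
    (∀ x y : TraceMonoid A I, ∃ g, IsGlbDvd x y g) ∧
    (∀ l₁ l₂ : List A, IsCliqueList I l₁ → IsCliqueList I l₂ →
      IsGlbDvd (listProd I l₁) (listProd I l₂)
        (listProd I (l₁.filter fun a => decide (a ∈ l₂)))) :=
  stmt5_general
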